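/- Let S ⊆ ℤⁿ be an n-dimensional skew shape and M_S the associated module over the free commutative monoid ⟨x₁,…,x_n⟩. Then M_S is indecomposable if and only if S is connected; more generally, if S = S₁ ⊔ S₂ ⊔ … ⊔ S_k is the decomposition of S into connected components, then M_S = M_{S₁} ⊕ M_{S₂} ⊕ … ⊕ M_{S_k} is the decomposition of M_S into indecomposable direct summands. -/

import Mathlib

universe u v

/-- A module over a monoid-with-zero `A` on a pointed set ("vector space over 𝔽₁"):
a pointed set `(M, 0)` with an action of `A` satisfying `1•m = m`, `(a*b)•m = a•(b•m)`,
`0•m = 0` and `a•0 = 0`. -/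
structure FModule (A : Type v) [MonoidWithZero A] : Type (max (u + 1) v) where
  carrier : Type u
  zero : carrier
  smul : A → carrier → carrier
  one_smul : ∀ m, smul 1 m = m
  mul_smul : ∀ a b m, smul (a * b) m = smul a (smul b m)
  zero_smul : ∀ m, smul 0 m = zero
  smul_zero : ∀ a, smul a zero = zero

namespace FModule

variable {A : Type v} [MonoidWithZero A]

/-- `N` is an `A`-submodule of `M` : a subset containing the basepoint and closed under
the action of `A`. -/
def IsSubmod (M : FModule A) (N : Set M.carrier) : Prop :=
  M.zero ∈ N ∧ ∀ (a : A), ∀ m ∈ N, M.smul a m ∈ N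

/-- The submodule `N ⊆ M` as an `A`-module in its own right. -/
def sub (M : FModule A) (N : Set M.carrier) (h : M.IsSubmod N) : FModule A where
  carrier := N
  zero := ⟨M.zero, h.1⟩
  smul a m := ⟨M.smul a m.1, h.2 a m.1 m.2⟩
  one_smul m := Subtype.ext (M.one_smul m.1)
  mul_smul a b m := Subtype.ext (M.mul_smul a b m.1)
  zero_smul m := Subtype.ext (M.zero_smul m.1)
  smul_zero a := Subtype.ext (M.smul_zero a)

open Classical in
/-- The quotient `M/N` of `M` by a submodule `N`: the pointed set `(M ∖ N) ∪ {0}`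
with the induced `A`-action. -/
noncomputable def quot (M : FModule A) (N : Set M.carrier) (h : M.IsSubmod N) :
    FModule A where
  carrier := {x : M.carrier // x = M.zero ∨ x ∉ N}
  zero := ⟨M.zero, Or.inl rfl⟩
  smul a m := if hmem : M.smul a m.1 ∈ N then ⟨M.zero, Or.inl rfl⟩
    else ⟨M.smul a m.1, Or.inr hmem⟩
  one_smul := by
    classical
    rintro ⟨x, hx⟩
    by_cases hmem : M.smul 1 x ∈ N
    · have hxN : x ∈ N := by rwa [M.one_smul] at hmem
      have hx0 : x = M.zero := hx.resolve_right fun hc => hc hxN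
      simp only [dif_pos hmem]
      exact Subtype.ext hx0.symm
    · simp only [dif_neg hmem]
      exact Subtype.ext (M.one_smul x)
  mul_smul := by
    classical
    rintro a b ⟨x, hx⟩
    by_cases hb : M.smul b x ∈ N
    · have hab : M.smul (a * b) x ∈ N := by
        rw [M.mul_smul]; exact h.2 a _ hb
      have h0 : M.smul a M.zero ∈ N := by
        rw [M.smul_zero]; exact h.1
      simp only [dif_pos hb, dif_pos hab, dif_pos h0]
    · by_cases hab : M.smul a (M.smul b x) ∈ N
      · have hab' : M.smul (a * b) x ∈ N := by rw [M.mul_smul]; exact hab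
        simp only [dif_pos hab', dif_neg hb, dif_pos hab]
      · have hab' : M.smul (a * b) x ∉ N := by rw [M.mul_smul]; exact hab
        simp only [dif_neg hab', dif_neg hb, dif_neg hab]
        exact Subtype.ext (M.mul_smul a b x)
  zero_smul := by
    classical
    rintro ⟨x, hx⟩
    have h0 : M.smul 0 x ∈ N := by rw [M.zero_smul]; exact h.1
    simp only [dif_pos h0]
  smul_zero := by
    classical
    intro a
    have h0 : M.smul a M.zero ∈ N := by rw [M.smul_zero]; exact h.1
    simp only [dif_pos h0]

/-- A morphism of `A`-modules: a pointed map compatible with the `A`-action. -/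
structure Hom (M N : FModule A) where
  toFun : M.carrier → N.carrier
  map_zero : toFun M.zero = N.zero
  map_smul : ∀ a m, toFun (M.smul a m) = N.smul a (toFun m)

/-- A morphism is normal if every fibre other than the fibre of the basepoint has at
most one element. -/
def Hom.Normal {M N : FModule A} (f : Hom M N) : Prop :=
  ∀ m m', f.toFun m = f.toFun m' → f.toFun m ≠ N.zero → m = m'

/-- Composition of morphisms. -/
def Hom.comp {M N L : FModule A} (g : Hom N L) (f : Hom M N) : Hom M L where
  toFun := g.toFun ∘ f.toFun
  map_zero := by
    show g.toFun (f.toFun M.zero) = L.zero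
    rw [f.map_zero, g.map_zero]
  map_smul a m := by
    show g.toFun (f.toFun (M.smul a m)) = L.smul a (g.toFun (f.toFun m))
    rw [f.map_smul, g.map_smul]

/-- An isomorphism of `A`-modules. -/
structure Iso (M N : FModule A) where
  toEquiv : M.carrier ≃ N.carrier
  map_zero : toEquiv M.zero = N.zero
  map_smul : ∀ a m, toEquiv (M.smul a m) = N.smul a (toEquiv m)

def Iso.refl (M : FModule A) : Iso M M := ⟨Equiv.refl _, rfl, fun _ _ => rfl⟩

def Iso.symm {M N : FModule A} (e : Iso M N) : Iso N M where
  toEquiv := e.toEquiv.symm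
  map_zero := by rw [Equiv.symm_apply_eq, e.map_zero]
  map_smul a m := by
    apply e.toEquiv.injective
    rw [e.map_smul, Equiv.apply_symm_apply, Equiv.apply_symm_apply]

def Iso.trans {M N L : FModule A} (e : Iso M N) (f : Iso N L) : Iso M L where
  toEquiv := e.toEquiv.trans f.toEquiv
  map_zero := by
    simp only [Equiv.trans_apply, e.map_zero, f.map_zero]
  map_smul a m := by
    simp only [Equiv.trans_apply, e.map_smul, f.map_smul]

/-- The wedge sum (direct sum, coproduct) `M ⊕ N` of two `A`-modules, realized as the
subset of `M × N` of pairs with at least one coordinate equal to the basepoint. -/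
def wedge (M N : FModule A) : FModule A where
  carrier := {p : M.carrier × N.carrier // p.1 = M.zero ∨ p.2 = N.zero}
  zero := ⟨(M.zero, N.zero), Or.inl rfl⟩
  smul a p := ⟨(M.smul a p.1.1, N.smul a p.1.2), by
    rcases p.2 with h1 | h2
    · exact Or.inl (by rw [h1, M.smul_zero])
    · exact Or.inr (by rw [h2, N.smul_zero])⟩
  one_smul p := Subtype.ext (Prod.ext (M.one_smul _) (N.one_smul _))
  mul_smul a b p := Subtype.ext (Prod.ext (M.mul_smul _ _ _) (N.mul_smul _ _ _))
  zero_smul p := Subtype.ext (Prod.ext (M.zero_smul _) (N.zero_smul _))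
  smul_zero a := Subtype.ext (Prod.ext (M.smul_zero _) (N.smul_zero _))

/-- A module `M` is of type α if every `a ∈ A` acts on `M` by a normal map of pointed
sets, i.e. `a•m₁ = a•m₂` implies `m₁ = m₂` or `a•m₁ = a•m₂ = 0`. -/
def TypeAlpha (M : FModule A) : Prop :=
  ∀ (a : A) (m₁ m₂ : M.carrier),
    M.smul a m₁ = M.smul a m₂ → m₁ = m₂ ∨ M.smul a m₁ = M.zero

/-- A module is indecomposable if it is nonzero and admits no decomposition as a wedge
sum (internally: a pair of submodules covering `M` and meeting only in `0`) with both
pieces nonzero. -/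
def Indecomposable (M : FModule A) : Prop :=
  (∃ m : M.carrier, m ≠ M.zero) ∧
  ∀ P Q : Set M.carrier, M.IsSubmod P → M.IsSubmod Q → P ∪ Q = Set.univ →
    P ∩ Q ⊆ {M.zero} → P = {M.zero} ∨ Q = {M.zero}

end FModule
/-! ### The free commutative monoid on `n` generators and skew shapes -/

/-- The free commutative monoid `⟨x₁,…,x_n⟩ = 𝔽₁⟨x₁,…,x_n⟩` on `n` generators with a
zero adjoined: monomials `x^e`, `e ∈ ℤⁿ_{≥0}`, together with `0`. -/
def FreeCM (n : ℕ) := WithZero (Multiplicative (Fin n → ℕ))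

instance (n : ℕ) : CommMonoidWithZero (FreeCM n) :=
  inferInstanceAs (CommMonoidWithZero (WithZero (Multiplicative (Fin n → ℕ))))

instance (n : ℕ) : NoZeroDivisors (FreeCM n) :=
  inferInstanceAs (NoZeroDivisors (WithZero (Multiplicative (Fin n → ℕ))))

/-- The monomial `x^e`. -/
def monomial {n : ℕ} (e : Fin n → ℕ) : FreeCM n :=
  ((Multiplicative.ofAdd e : Multiplicative (Fin n → ℕ)) : WithZero (Multiplicative (Fin n → ℕ)))

instance (n : ℕ) : Nontrivial (FreeCM n) :=
  inferInstanceAs (Nontrivial (WithZero (Multiplicative (Fin n → ℕ))))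

open Classical in
/-- The canonical `ℤⁿ`-grading of `FreeCM n`, `deg xᵢ = eᵢ` (the value at `0` is irrelevant). -/
noncomputable def freeCMdeg {n : ℕ} (a : FreeCM n) : Fin n → ℤ :=
  if h : a = 0 then 0 else fun i => ((Multiplicative.toAdd (WithZero.unzero h)) i : ℤ)

/-- The maximal ideal `m = (x₁, …, x_n)` of `FreeCM n`: all non-units. -/
def mIdeal (n : ℕ) : Set (FreeCM n) := {a | a ≠ 1}

/-- The coercion `ℤⁿ_{≥0} → ℤⁿ`. -/
def coeE {n : ℕ} (e : Fin n → ℕ) : Fin n → ℤ := fun i => (e i : ℤ)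

/-- An `n`-dimensional skew shape: a finite convex sub-poset of `ℤⁿ` with the
componentwise partial order. -/
structure SkewShape (n : ℕ) where
  carrier : Set (Fin n → ℤ)
  finite : carrier.Finite
  convex : ∀ ⦃x y z : Fin n → ℤ⦄, x ∈ carrier → y ∈ carrier → x ≤ z → z ≤ y → z ∈ carrier

namespace SkewShape

variable {n : ℕ}

/-- Direct comparability of two points of the shape. -/
def rel (S : SkewShape n) (x y : Fin n → ℤ) : Prop :=
  x ∈ S.carrier ∧ y ∈ S.carrier ∧ (x ≤ y ∨ y ≤ x)

/-- A skew shape is connected if it is nonempty and, as a poset, any two of its points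
are joined by a chain of comparabilities (equivalently, a lattice path) inside the shape. -/
def Connected (S : SkewShape n) : Prop :=
  S.carrier.Nonempty ∧
    ∀ x ∈ S.carrier, ∀ y ∈ S.carrier, Relation.ReflTransGen S.rel x y

open Classical in
/-- The action of the monomial `x^e` on `S ⊔ {0}`. -/
noncomputable def act (S : SkewShape n) (e : Fin n → ℕ) :
    Option ↥S.carrier → Option ↥S.carrier
  | none => none
  | some s => if h : s.1 + coeE e ∈ S.carrier then some ⟨s.1 + coeE e, h⟩ else none

theorem act_zero (S : SkewShape n) (m : Option ↥S.carrier) : S.act 0 m = m := by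
  classical
  cases m with
  | none => rfl
  | some s =>
    have he : s.1 + coeE (0 : Fin n → ℕ) = s.1 := by
      funext i; simp [coeE]
    show (if h : s.1 + coeE 0 ∈ S.carrier then _ else _) = _
    rw [dif_pos (by rw [he]; exact s.2)]
    exact congrArg some (Subtype.ext he)

theorem act_add (S : SkewShape n) (e f : Fin n → ℕ) (m : Option ↥S.carrier) :
    S.act (e + f) m = S.act e (S.act f m) := by
  classical
  cases m with
  | none => rfl
  | some s =>
    have hef : s.1 + coeE (e + f) = s.1 + coeE f + coeE e := by
      funext i; simp [coeE]; ring
    by_cases hf : s.1 + coeE f ∈ S.carrier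
    · show (if h : s.1 + coeE (e + f) ∈ S.carrier then _ else _)
        = S.act e (if h : s.1 + coeE f ∈ S.carrier then _ else _)
      rw [dif_pos hf]
      show _ = (if h : (s.1 + coeE f) + coeE e ∈ S.carrier then _ else _)
      by_cases hefm : s.1 + coeE (e + f) ∈ S.carrier
      · rw [dif_pos hefm, dif_pos (by rw [← hef]; exact hefm)]
        exact congrArg some (Subtype.ext hef)
      · rw [dif_neg hefm, dif_neg (by rw [← hef]; exact hefm)]
    · have hnef : s.1 + coeE (e + f) ∉ S.carrier := by
        intro hmem
        apply hf
        refine S.convex s.2 hmem ?_ ?_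
        · intro i
          simp only [coeE, Pi.add_apply]
          have : (0 : ℤ) ≤ (f i : ℤ) := Int.ofNat_nonneg _
          omega
        · intro i
          have h1 : s.1 i + coeE (e + f) i = s.1 i + coeE f i + coeE e i := by
            have := congrFun hef i
            simpa using this
          have : (0 : ℤ) ≤ (e i : ℤ) := Int.ofNat_nonneg _
          simp only [coeE, Pi.add_apply] at h1 ⊢
          omega
      show (if h : s.1 + coeE (e + f) ∈ S.carrier then _ else _)
        = S.act e (if h : s.1 + coeE f ∈ S.carrier then _ else _)
      rw [dif_neg hnef, dif_neg hf]
      rfl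

open Classical in
/-- The `FreeCM n`-module `M_S` attached to a skew shape `S`: underlying pointed set
`S ⊔ {0}`, with `x^e • s = s + e` if `s + e ∈ S` and `0` otherwise. -/
noncomputable def Mod (S : SkewShape n) : FModule (FreeCM n) where
  carrier := Option ↥S.carrier
  zero := none
  smul a m := if h : a = 0 then none
    else S.act (Multiplicative.toAdd (WithZero.unzero h)) m
  one_smul m := by
    beta_reduce
    rw [dif_neg (one_ne_zero : (1 : FreeCM n) ≠ 0)]
    have h1 : WithZero.unzero (one_ne_zero : (1 : FreeCM n) ≠ 0) = 1 :=
      WithZero.unzero_coe _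
    rw [h1]
    show S.act 0 m = m
    exact S.act_zero m
  mul_smul a b m := by
    beta_reduce
    by_cases ha : a = 0
    · subst ha
      rw [dif_pos (zero_mul b), dif_pos rfl]
    · by_cases hb : b = 0
      · subst hb
        rw [dif_pos (mul_zero a), dif_pos rfl]
        cases m with
        | none =>
          rw [dif_neg ha]
          rfl
        | some s =>
          rw [dif_neg ha]
          rfl
      · have hab : a * b ≠ 0 := mul_ne_zero ha hb
        rw [dif_neg hab, dif_neg ha, dif_neg hb]
        have : WithZero.unzero hab = WithZero.unzero ha * WithZero.unzero hb :=
          WithZero.unzero_mul hab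
        rw [this]
        have htoadd : Multiplicative.toAdd (WithZero.unzero ha * WithZero.unzero hb)
            = Multiplicative.toAdd (WithZero.unzero ha) + Multiplicative.toAdd (WithZero.unzero hb) := rfl
        rw [htoadd]
        exact S.act_add _ _ m
  zero_smul m := dif_pos rfl
  smul_zero a := by
    beta_reduce
    by_cases ha : a = 0
    · rw [dif_pos ha]
    · rw [dif_neg ha]
      rfl

end SkewShape
namespace SkewShape

variable {n : ℕ}

/-- The subset of `M_S = S ⊔ {0}` determined by a set `T` of lattice points:
`{0} ∪ {s ∈ S | s ∈ T}`. -/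
def msub (S : SkewShape n) (T : Set (Fin n → ℤ)) : Set (Option ↥S.carrier) :=
  insert none {x : Option ↥S.carrier | ∃ s : ↥S.carrier, s.1 ∈ T ∧ x = some s}

end SkewShape

/-!
Submodules of `M_S` are the sets `{0} ∪ U` with `U` an upper set of `S`. A decomposition
`M_S = P ⊕ Q` therefore splits `S` into two complementary upper sets, i.e. into a set that is
both upper and lower, and in a connected poset such a set is empty or everything. Conversely,
the comparability class of a point and its complement are both upper sets, and they decompose
`M_S` unless `S` is connected. Pairwise incomparability makes each component `Sᵢ` an upper set
of `S`, and the inclusion `Sᵢ ⊆ S` identifies `M_{Sᵢ}` with the corresponding summand.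
-/

namespace FModule

variable {A : Type v} [MonoidWithZero A]

theorem IsSubmod.image {M N : FModule A} (e : Iso M N) {P : Set M.carrier}
    (hP : M.IsSubmod P) : N.IsSubmod (e.toEquiv '' P) := by
  refine ⟨⟨M.zero, hP.1, e.map_zero⟩, ?_⟩
  rintro a _ ⟨m, hm, rfl⟩
  exact ⟨M.smul a m, hP.2 a m hm, e.map_smul a m⟩

theorem Iso.indecomposable {M N : FModule A} (e : Iso M N) (h : N.Indecomposable) :
    M.Indecomposable := by
  obtain ⟨⟨m, hm⟩, hdec⟩ := h
  have himage_zero : e.toEquiv '' {M.zero} = {N.zero} := by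
    rw [Set.image_singleton, e.map_zero]
  refine ⟨⟨e.toEquiv.symm m, fun h0 => hm ?_⟩, fun P Q hP hQ hcov hint => ?_⟩
  · rw [← e.map_zero, ← h0, Equiv.apply_symm_apply]
  have hcov' : e.toEquiv '' P ∪ e.toEquiv '' Q = Set.univ := by
    rw [← Set.image_union, hcov, Set.image_univ_of_surjective e.toEquiv.surjective]
  have hint' : e.toEquiv '' P ∩ e.toEquiv '' Q ⊆ {N.zero} := by
    rw [← Set.image_inter e.toEquiv.injective, ← himage_zero]
    exact Set.image_mono hint
  have hpull : ∀ R, e.toEquiv '' R = {N.zero} → R = {M.zero} := fun R hR =>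
    Set.image_injective.mpr e.toEquiv.injective (hR.trans himage_zero.symm)
  exact (hdec _ _ (hP.image e) (hQ.image e) hcov' hint').imp (hpull P) (hpull Q)

noncomputable def Hom.isoSubOfInjective {M N : FModule A} (f : Hom N M)
    (hf : Function.Injective f.toFun) {P : Set M.carrier} (hP : M.IsSubmod P)
    (hrange : Set.range f.toFun = P) : Iso N (M.sub P hP) where
  toEquiv := (Equiv.ofInjective f.toFun hf).trans (Equiv.setCongr hrange)
  map_zero := Subtype.ext f.map_zero
  map_smul a m := Subtype.ext (f.map_smul a m)

end FModule

theorem FreeCM.eq_zero_or_eq_monomial {n : ℕ} (a : FreeCM n) :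
    a = 0 ∨ ∃ e, a = monomial e := by
  rcases eq_or_ne a 0 with h | h
  · exact Or.inl h
  · exact Or.inr ⟨Multiplicative.toAdd (WithZero.unzero h), (WithZero.coe_unzero h).symm⟩

theorem le_add_coeE {n : ℕ} (x : Fin n → ℤ) (e : Fin n → ℕ) : x ≤ x + coeE e :=
  fun i => le_add_of_nonneg_right (Int.natCast_nonneg (e i))

theorem Set.eq_singleton_none_iff {α : Type*} {P : Set (Option α)} (h0 : none ∈ P) :
    P = {none} ↔ ∀ s, some s ∉ P := by
  refine ⟨fun h s hs => Option.some_ne_none s (h.subset hs), fun h => ?_⟩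
  refine Set.eq_singleton_iff_unique_mem.mpr ⟨h0, ?_⟩
  rintro (_ | s) hs
  · rfl
  · exact absurd hs (h s)

namespace SkewShape

variable {n : ℕ} {S : SkewShape n}

instance (S : SkewShape n) : Std.Symm S.rel :=
  ⟨fun _ _ ⟨hx, hy, h⟩ => ⟨hy, hx, h.symm⟩⟩

theorem act_some_of_mem {e : Fin n → ℕ} {s : S.carrier} (h : s.1 + coeE e ∈ S.carrier) :
    S.act e (some s) = some ⟨s.1 + coeE e, h⟩ :=
  dif_pos h

theorem act_some_of_notMem {e : Fin n → ℕ} {s : S.carrier} (h : s.1 + coeE e ∉ S.carrier) :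
    S.act e (some s) = none :=
  dif_neg h

theorem mod_smul_monomial (e : Fin n → ℕ) (m : Option S.carrier) :
    S.Mod.smul (monomial e) m = S.act e m := by
  classical
  have hne : (monomial e : FreeCM n) ≠ 0 := WithZero.coe_ne_zero
  show (if h : monomial e = 0 then none else S.act (Multiplicative.toAdd (WithZero.unzero h)) m) = _
  rw [dif_neg hne, show WithZero.unzero hne = Multiplicative.ofAdd e from WithZero.unzero_coe _]
  rfl

theorem exists_smul_eq_of_le {s t : S.carrier} (hle : s ≤ t) :
    ∃ a, S.Mod.smul a (some s) = some t := by
  let e : Fin n → ℕ := fun i => (t.1 i - s.1 i).toNat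
  have he : s.1 + coeE e = t.1 := by
    funext i
    have : s.1 i ≤ t.1 i := hle i
    simp only [Pi.add_apply, coeE, e]
    omega
  refine ⟨monomial e, ?_⟩
  rw [mod_smul_monomial, act_some_of_mem (he ▸ t.2)]
  exact congrArg some (Subtype.ext he)

theorem isUpperSet_of_isSubmod {P : Set S.Mod.carrier} (hP : S.Mod.IsSubmod P) :
    IsUpperSet {s : S.carrier | some s ∈ P} := by
  intro s t hle hs
  obtain ⟨a, ha⟩ := exists_smul_eq_of_le hle
  show some t ∈ P
  exact ha ▸ hP.2 a _ hs

theorem none_mem_msub (T : Set (Fin n → ℤ)) : none ∈ S.msub T :=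
  Set.mem_insert _ _

@[simp]
theorem some_mem_msub {T : Set (Fin n → ℤ)} {s : S.carrier} : some s ∈ S.msub T ↔ s.1 ∈ T := by
  simp [msub]

theorem isSubmod_msub {T : Set (Fin n → ℤ)}
    (hT : IsUpperSet (Subtype.val ⁻¹' T : Set S.carrier)) : S.Mod.IsSubmod (S.msub T) := by
  refine ⟨none_mem_msub T, fun a (m : Option S.carrier) hm => ?_⟩
  rcases FreeCM.eq_zero_or_eq_monomial a with rfl | ⟨e, rfl⟩
  · exact S.Mod.zero_smul m ▸ none_mem_msub T
  rw [mod_smul_monomial]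
  change S.act e m ∈ S.msub T
  rcases m with _ | s
  · exact none_mem_msub T
  by_cases h : s.1 + coeE e ∈ S.carrier
  · rw [act_some_of_mem h, some_mem_msub]
    exact hT (show s ≤ ⟨_, h⟩ from le_add_coeE s.1 e) (some_mem_msub.mp hm)
  · rw [act_some_of_notMem h]
    exact none_mem_msub T

theorem msub_union_msub_compl (T : Set (Fin n → ℤ)) : S.msub T ∪ S.msub Tᶜ = Set.univ := by
  refine Set.eq_univ_of_forall fun m => ?_
  rcases m with _ | s
  · exact Or.inl (none_mem_msub T)
  · by_cases h : s.1 ∈ T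
    · exact Or.inl (some_mem_msub.mpr h)
    · exact Or.inr (some_mem_msub.mpr h)

theorem msub_inter_msub_subset {T U : Set (Fin n → ℤ)} (h : Disjoint T U) :
    S.msub T ∩ S.msub U ⊆ {none} := by
  rintro (_ | s) ⟨hT, hU⟩
  · rfl
  · exact absurd (some_mem_msub.mp hU) (h.notMem_of_mem_left (some_mem_msub.mp hT))

theorem msub_eq_singleton_iff {T : Set (Fin n → ℤ)} :
    S.msub T = {none} ↔ ∀ s : S.carrier, s.1 ∉ T := by
  simp only [Set.eq_singleton_none_iff (none_mem_msub T), some_mem_msub]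

theorem mem_of_reflTransGen {U : Set S.carrier} (hU : IsUpperSet U) (hL : IsLowerSet U)
    {x y : Fin n → ℤ} (hxy : Relation.ReflTransGen S.rel x y) (hx : x ∈ S.carrier)
    (hy : y ∈ S.carrier) (hxU : ⟨x, hx⟩ ∈ U) : ⟨y, hy⟩ ∈ U := by
  induction hxy with
  | refl => exact hxU
  | tail _ hbc ih =>
    obtain ⟨hb, hc, hle | hle⟩ := hbc
    · exact hU (show (⟨_, hb⟩ : S.carrier) ≤ ⟨_, hc⟩ from hle) (ih hb)
    · exact hL (show (⟨_, hc⟩ : S.carrier) ≤ ⟨_, hb⟩ from hle) (ih hb)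

theorem Connected.eq_univ_of_isUpperSet_of_isLowerSet (hS : S.Connected) {U : Set S.carrier}
    (hU : IsUpperSet U) (hL : IsLowerSet U) (hne : U.Nonempty) : U = Set.univ := by
  obtain ⟨s, hs⟩ := hne
  exact Set.eq_univ_of_forall fun t => mem_of_reflTransGen hU hL (hS.2 s.1 s.2 t.1 t.2) s.2 t.2 hs

theorem Connected.indecomposable_mod (hS : S.Connected) : S.Mod.Indecomposable := by
  obtain ⟨x, hx⟩ := hS.1
  refine ⟨⟨some ⟨x, hx⟩, Option.some_ne_none _⟩, fun P Q hP hQ hcov hint => ?_⟩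
  let U : Set S.carrier := {s | some s ∈ P}
  have hUc : Uᶜ = {s | some s ∈ Q} := by
    ext s
    refine ⟨fun hs => (hcov.symm ▸ Set.mem_univ (some s) : some s ∈ P ∪ Q).resolve_left hs,
      fun hsQ hsP => Option.some_ne_none s (hint ⟨hsP, hsQ⟩)⟩
  have hL : IsLowerSet U := isUpperSet_compl.mp (hUc ▸ isUpperSet_of_isSubmod hQ)
  rcases U.eq_empty_or_nonempty with hU | hU
  · exact Or.inl ((Set.eq_singleton_none_iff hP.1).mpr fun s hs => hU.subset hs)
  · refine Or.inr ((Set.eq_singleton_none_iff hQ.1).mpr fun s hsQ => ?_)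
    have hsU : s ∈ U := Set.eq_univ_iff_forall.mp
      (hS.eq_univ_of_isUpperSet_of_isLowerSet (isUpperSet_of_isSubmod hP) hL hU) s
    exact (hUc.symm ▸ hsQ : s ∈ Uᶜ) hsU

theorem connected_of_indecomposable_mod (h : S.Mod.Indecomposable) : S.Connected := by
  obtain ⟨⟨m, hm⟩, hdec⟩ := h
  obtain ⟨x, rfl⟩ := Option.ne_none_iff_exists'.mp hm
  let R : Set (Fin n → ℤ) := {y | Relation.ReflTransGen S.rel x.1 y}
  have hR : IsUpperSet (Subtype.val ⁻¹' R : Set S.carrier) :=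
    fun s t hle hs => Relation.ReflTransGen.tail hs ⟨s.2, t.2, Or.inl hle⟩
  have hRc : IsUpperSet (Subtype.val ⁻¹' Rᶜ : Set S.carrier) :=
    fun s t hle hs ht => hs (Relation.ReflTransGen.tail ht ⟨t.2, s.2, Or.inr hle⟩)
  have hreach : ∀ y : S.carrier, y.1 ∈ R := by
    rcases hdec _ _ (isSubmod_msub hR) (isSubmod_msub hRc) (msub_union_msub_compl R)
      (msub_inter_msub_subset disjoint_compl_right) with h | h
    · exact absurd Relation.ReflTransGen.refl (msub_eq_singleton_iff.mp h x)
    · simpa using msub_eq_singleton_iff.mp h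
  exact ⟨⟨x.1, x.2⟩, fun y hy z hz => (symm (hreach ⟨y, hy⟩)).trans (hreach ⟨z, hz⟩)⟩

theorem indecomposable_mod_iff_connected : S.Mod.Indecomposable ↔ S.Connected :=
  ⟨connected_of_indecomposable_mod, Connected.indecomposable_mod⟩

theorem act_map_inclusion {T : SkewShape n} (hTS : T.carrier ⊆ S.carrier)
    (hT : IsUpperSet (Subtype.val ⁻¹' T.carrier : Set S.carrier)) (e : Fin n → ℕ)
    (m : Option T.carrier) :
    S.act e (m.map (Set.inclusion hTS)) = (T.act e m).map (Set.inclusion hTS) := by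
  rcases m with _ | t
  · rfl
  by_cases h : t.1 + coeE e ∈ T.carrier
  · rw [act_some_of_mem h]
    exact act_some_of_mem (hTS h)
  · have hS : t.1 + coeE e ∉ S.carrier := fun hS =>
      h (hT (show Set.inclusion hTS t ≤ ⟨_, hS⟩ from le_add_coeE t.1 e) t.2)
    rw [act_some_of_notMem h]
    exact act_some_of_notMem hS

def inclusionHom {T : SkewShape n} (hTS : T.carrier ⊆ S.carrier)
    (hT : IsUpperSet (Subtype.val ⁻¹' T.carrier : Set S.carrier)) :
    FModule.Hom T.Mod S.Mod where
  toFun := Option.map (Set.inclusion hTS)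
  map_zero := rfl
  map_smul a m := by
    rcases FreeCM.eq_zero_or_eq_monomial a with rfl | ⟨e, rfl⟩
    · exact (congrArg _ (T.Mod.zero_smul m)).trans (S.Mod.zero_smul _).symm
    · exact (congrArg _ (mod_smul_monomial e m)).trans
        ((act_map_inclusion hTS hT e m).symm.trans (mod_smul_monomial e _).symm)

theorem range_inclusionHom {T : SkewShape n} (hTS : T.carrier ⊆ S.carrier)
    (hT : IsUpperSet (Subtype.val ⁻¹' T.carrier : Set S.carrier)) :
    Set.range (inclusionHom hTS hT).toFun = S.msub T.carrier := by
  ext (_ | s)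
  · exact ⟨fun _ => none_mem_msub _, fun _ => ⟨none, rfl⟩⟩
  · refine ⟨?_, fun hs => ⟨some ⟨s.1, some_mem_msub.mp hs⟩, rfl⟩⟩
    rintro ⟨_ | t, ht⟩
    · cases ht
    · obtain rfl := Option.some.inj ht
      exact some_mem_msub.mpr t.2

noncomputable def msubIso {T : SkewShape n} (hTS : T.carrier ⊆ S.carrier)
    (hT : IsUpperSet (Subtype.val ⁻¹' T.carrier : Set S.carrier))
    (h : S.Mod.IsSubmod (S.msub T.carrier)) :
    FModule.Iso (S.Mod.sub (S.msub T.carrier) h) T.Mod :=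
  ((inclusionHom hTS hT).isoSubOfInjective
    (Option.map_injective (Set.inclusion_injective hTS)) h (range_inclusionHom hTS hT)).symm

theorem isUpperSet_of_pairwise_incomparable {ι : Type*} {T : ι → Set (Fin n → ℤ)}
    (hcov : S.carrier ⊆ ⋃ i, T i)
    (hinc : ∀ i j, i ≠ j → ∀ x ∈ T i, ∀ y ∈ T j, ¬ (x ≤ y ∨ y ≤ x)) (i : ι) :
    IsUpperSet (Subtype.val ⁻¹' T i : Set S.carrier) := by
  intro s t hle hs
  obtain ⟨j, hj⟩ := Set.mem_iUnion.mp (hcov t.2)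
  obtain rfl : i = j := by_contra fun hij => hinc i j hij s.1 hs t.1 hj (Or.inl hle)
  exact hj

theorem insert_none_iUnion_msub {ι : Type*} {T : ι → Set (Fin n → ℤ)}
    (hcov : S.carrier ⊆ ⋃ i, T i) : insert none (⋃ i, S.msub (T i)) = Set.univ := by
  refine Set.eq_univ_of_forall fun m => ?_
  rcases m with _ | s
  · exact Set.mem_insert _ _
  · obtain ⟨i, hi⟩ := Set.mem_iUnion.mp (hcov s.2)
    exact Or.inr (Set.mem_iUnion.mpr ⟨i, some_mem_msub.mpr hi⟩)

end SkewShape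

open FModule SkewShape in
/-- `M_S` is indecomposable iff the skew shape `S` is connected; more generally, a
decomposition `S = S₁ ⊔ ⋯ ⊔ S_k` into connected components (pairwise mutually
incomparable connected pieces covering `S`) yields the decomposition
`M_S = M_{S₁} ⊕ ⋯ ⊕ M_{S_k}` of `M_S` into indecomposable direct summands. -/
theorem skewMod_indecomposable_iff_connected {n : ℕ} (S : SkewShape n) :
    ((S.Mod).Indecomposable ↔ S.Connected) ∧
    (∀ (k : ℕ) (C : Fin k → SkewShape n),
      (∀ i, (C i).Connected) →
      (⋃ i, (C i).carrier) = S.carrier →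
      (∀ i j, i ≠ j → ∀ x ∈ (C i).carrier, ∀ y ∈ (C j).carrier, ¬ (x ≤ y ∨ y ≤ x)) →
      ∃ h : ∀ i, (S.Mod).IsSubmod (S.msub (C i).carrier),
        (∀ i, ((S.Mod).sub (S.msub (C i).carrier) (h i)).Indecomposable ∧
          Nonempty (Iso ((S.Mod).sub (S.msub (C i).carrier) (h i)) ((C i).Mod))) ∧
        insert (S.Mod).zero (⋃ i, S.msub (C i).carrier) = Set.univ ∧
        (∀ i j, i ≠ j →
          S.msub (C i).carrier ∩ S.msub (C j).carrier ⊆ {(S.Mod).zero})) := by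
  refine ⟨indecomposable_mod_iff_connected, fun k C hconn hcov hinc => ?_⟩
  have hsub (i : Fin k) : (C i).carrier ⊆ S.carrier :=
    hcov ▸ Set.subset_iUnion (fun j => (C j).carrier) i
  have hup := isUpperSet_of_pairwise_incomparable hcov.symm.subset hinc
  refine ⟨fun i => isSubmod_msub (hup i), fun i => ?_,
    insert_none_iUnion_msub hcov.symm.subset, fun i j hij => msub_inter_msub_subset ?_⟩
  · let e := msubIso (hsub i) (hup i) (isSubmod_msub (hup i))
    exact ⟨e.indecomposable (hconn i).indecomposable_mod, ⟨e⟩⟩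
  · exact Set.disjoint_left.mpr fun x hi hj => hinc i j hij x hi x hj (Or.inl le_rfl)
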